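/- Let x and y be vertices in sEB_n with x < y. Then μ(x) ≥ μ(y) and f(x) < f(y). Moreover h(x) < h(y) if and only if μ(x) = μ(y), and h(x) > h(y) if and only if μ(x) > μ(y). -/

import Mathlib

/-- An `s`-coloured binary tree (of merges): each caret carries a colour. -/
inductive CTree (s : ℕ) : Type
  | leaf : CTree s
  | node (c : Fin s) (l r : CTree s) : CTree s
deriving DecidableEq

/-- Number of leaves of a coloured tree. -/
def CTree.leaves {s : ℕ} : CTree s → ℕ
  | .leaf => 1
  | .node _ l r => l.leaves + r.leaves

/-- Auxiliary elementarity predicate: each root-to-leaf path uses each colour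
at most once (carrying the set of colours already used). -/
def CTree.elemFrom {s : ℕ} : CTree s → Finset (Fin s) → Prop
  | .leaf, _ => True
  | .node c l r, used => c ∉ used ∧ l.elemFrom (insert c used) ∧ r.elemFrom (insert c used)

/-- An elementary coloured tree: at most one caret per colour per path. -/
def CTree.IsElem {s : ℕ} (t : CTree s) : Prop := t.elemFrom ∅

/-- An `s`-coloured forest: a finite ordered list of coloured trees.  The heads
(leaves) are at the top, the feet (roots) at the bottom; the forest records the
merges of a braige. -/
abbrev CForest (s : ℕ) : Type := List (CTree s)

/-- Total number of leaves of a forest. -/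
def CForest.leaves {s : ℕ} (F : CForest s) : ℕ := (F.map CTree.leaves).sum

/-- Number of feet (roots, i.e. trees) of a forest. -/
def CForest.feet {s : ℕ} (F : CForest s) : ℕ := F.length

/-- Elementary forest: each tree is elementary (at most one caret per colour
per head). -/
def CForest.IsElem {s : ℕ} (F : CForest s) : Prop := ∀ t ∈ F, t.IsElem

/-- `μ_k(F)`: the number of merges (trees) of `F` with exactly `k` leaves. -/
def muCount {s : ℕ} (F : CForest s) (k : ℕ) : ℕ := (F.map CTree.leaves).count k

/-- The tuple `μ(F) = (μ_{2^s}(F), μ_{2^s−1}(F), …, μ_4(F), μ_3(F))`, compared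
lexicographically. -/
def muVec (s : ℕ) (F : CForest s) : List ℕ :=
  ((List.range' 3 (2 ^ s - 2)).reverse).map (muCount F)

/-- `μ(F) < μ(F')` in the lexicographic order. -/
def muLt (s : ℕ) (F F' : CForest s) : Prop :=
  List.Lex (· < ·) (muVec s F) (muVec s F')

/-- `h = (μ, f)` ordered lexicographically: `h(F) < h(F')`. -/
def hLt (s : ℕ) (F F' : CForest s) : Prop :=
  muLt s F F' ∨ (muVec s F = muVec s F' ∧ F.length < F'.length)

/-- Graft a list of trees onto the leaves of a tree (returning the grafted tree
and the unused trees). -/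
def CTree.graft {s : ℕ} : CTree s → List (CTree s) → CTree s × List (CTree s)
  | .leaf, ts => (ts.headD .leaf, ts.tail)
  | .node c l r, ts =>
      let p := l.graft ts
      let q := r.graft p.2
      (.node c p.1 q.1, q.2)

/-- Graft a forest `F'` onto the leaves of the forest `E`: the composition of
the merging `F'` (near the heads) followed by the merging `E` (near the feet). -/
def CForest.graft {s : ℕ} : CForest s → List (CTree s) → CForest s
  | [], _ => []
  | t :: E, ts =>
      let p := CTree.graft t ts
      p.1 :: CForest.graft E p.2

/-!
Grafting replaces each block of consecutive trees of `Fy` sitting over a tree `t` of `E` by a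
single tree whose leaf count is the sum of the block.  When `t` is not a leaf the block has at
least two trees, so all of its leaf counts are below the new one; hence the multiset of leaf
counts goes up in the colexicographic order, which is additive over the blocks.  Elementarity
bounds every leaf count of `Fx` by `2 ^ s`, so truncating to the window `[3, 2 ^ s]` that `μ`
records keeps the comparison weakly.  The number of feet drops because `E` has fewer trees than
leaves.  The statements about `h` are then order logic.
-/

open Finsupp

namespace CTree

variable {s : ℕ}

lemma one_le_leaves (t : CTree s) : 1 ≤ t.leaves := by
  induction t with
  | leaf => rfl
  | node c l r ihl ihr => simp only [leaves]; omega

lemma leaves_le_two_pow_of_elemFrom (t : CTree s) :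
    ∀ used : Finset (Fin s), t.elemFrom used → t.leaves ≤ 2 ^ (s - used.card) := by
  induction t with
  | leaf => intro _ _; exact Nat.one_le_two_pow
  | node c l r ihl ihr =>
    rintro used ⟨hc, hl, hr⟩
    have hcard : used.card + 1 ≤ s := by
      simpa [Finset.card_insert_of_notMem hc] using Finset.card_le_univ (insert c used)
    have hl' := ihl _ hl
    have hr' := ihr _ hr
    rw [Finset.card_insert_of_notMem hc] at hl' hr'
    have hexp : s - used.card = s - (used.card + 1) + 1 := by omega
    simp only [leaves]
    rw [hexp, pow_succ]
    omega

lemma IsElem.leaves_le {t : CTree s} (ht : t.IsElem) : t.leaves ≤ 2 ^ s := by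
  simpa using t.leaves_le_two_pow_of_elemFrom ∅ ht

lemma graft_snd (t : CTree s) : ∀ ts : List (CTree s), (t.graft ts).2 = ts.drop t.leaves := by
  induction t with
  | leaf => intro ts; simp [graft, leaves, List.drop_one]
  | node c l r ihl ihr =>
    intro ts
    simp only [graft, leaves]
    rw [ihr, ihl, List.drop_drop]

lemma leaves_graft_fst (t : CTree s) : ∀ ts : List (CTree s), t.leaves ≤ ts.length →
    (t.graft ts).1.leaves = ((ts.take t.leaves).map leaves).sum := by
  induction t with
  | leaf =>
    rintro (_ | ⟨u, ts⟩) h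
    · simp [leaves] at h
    · simp [graft, leaves]
  | node c l r ihl ihr =>
    intro ts h
    have h' : l.leaves + r.leaves ≤ ts.length := h
    have := r.one_le_leaves
    simp only [graft, leaves]
    rw [graft_snd, ihl ts (by omega), ihr _ (by rw [List.length_drop]; omega), List.take_add,
      List.map_append, List.sum_append]

end CTree

lemma Multiset.toColex_toFinsupp_lt_single {m : Multiset ℕ} {K : ℕ} (hm : ∀ x ∈ m, x < K) :
    toColex (Multiset.toFinsupp m) < toColex (single K 1) := by
  refine Colex.lt_iff.2 ⟨K, fun j hKj => ?_, ?_⟩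
  · have hj : j ∉ m := fun hj => (hm j hj).not_gt hKj
    simp [Multiset.toFinsupp_apply, Multiset.count_eq_zero.2 hj, hKj.ne]
  · have hK : K ∉ m := fun hK => (hm K hK).false
    simp [Multiset.toFinsupp_apply, Multiset.count_eq_zero.2 hK]

lemma Multiset.toColex_toFinsupp_le_single_sum {m : Multiset ℕ} (hm : ∀ x ∈ m, 0 < x) :
    toColex (Multiset.toFinsupp m) ≤ toColex (single m.sum 1) := by
  by_cases hlt : ∀ x ∈ m, x < m.sum
  · exact (Multiset.toColex_toFinsupp_lt_single hlt).le
  simp only [not_forall, not_lt] at hlt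
  obtain ⟨x, hx, hsum⟩ := hlt
  have hsplit : x ::ₘ m.erase x = m := Multiset.cons_erase hx
  have hrest : m.erase x = 0 := by
    refine Multiset.eq_zero_of_forall_notMem fun y hy => ?_
    have hzero : (m.erase x).sum = 0 := by
      rw [← hsplit, Multiset.sum_cons] at hsum; omega
    exact (hm y (Multiset.mem_of_mem_erase hy)).ne' (Multiset.sum_eq_zero_iff.1 hzero y hy)
  rw [← hsplit, hrest, Multiset.cons_zero, Multiset.sum_singleton, Multiset.toFinsupp_singleton]

namespace CForest

variable {s : ℕ}

lemma graft_cons (t : CTree s) (E : CForest s) (ts : List (CTree s)) :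
    graft (t :: E) ts = (t.graft ts).1 :: graft E (ts.drop t.leaves) := by
  simp [graft, CTree.graft_snd]

lemma length_graft (E : CForest s) : ∀ ts : List (CTree s), (graft E ts).length = E.length := by
  induction E with
  | nil => intro ts; rfl
  | cons t E ih => intro ts; simp [graft, ih]

lemma length_lt_leaves {E : CForest s} (h : ∃ t ∈ E, t ≠ CTree.leaf) : E.length < E.leaves := by
  obtain ⟨t, ht, hnt⟩ := h
  have hlen : E.length = (E.map fun _ => 1).sum := by simp
  rw [hlen, leaves]
  refine List.sum_lt_sum _ _ (fun u _ => u.one_le_leaves) ⟨t, ht, ?_⟩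
  cases t with
  | leaf => exact absurd rfl hnt
  | node c l r => have := l.one_le_leaves; have := r.one_le_leaves; simp only [CTree.leaves]; omega

/-- `Colex (ℕ →₀ ℕ)` compares multiplicities of leaf counts from the largest leaf count down, as
the vector `μ` does. -/
noncomputable def leafProfile (F : CForest s) : Colex (ℕ →₀ ℕ) :=
  toColex (Multiset.toFinsupp (F.map CTree.leaves : Multiset ℕ))

lemma leafProfile_apply (F : CForest s) (k : ℕ) : ofColex F.leafProfile k = muCount F k :=
  Multiset.coe_count k _

lemma leafProfile_append (F G : CForest s) :
    (F ++ G).leafProfile = F.leafProfile + G.leafProfile := by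
  simp only [leafProfile, List.map_append, ← Multiset.coe_add, map_add, toColex_add]

lemma leafProfile_singleton (t : CTree s) :
    leafProfile [t] = toColex (single t.leaves 1) := by
  simp [leafProfile, Multiset.toFinsupp_singleton]

lemma leafProfile_take_le_graft_fst (t : CTree s) (ts : List (CTree s))
    (h : t.leaves ≤ ts.length) : leafProfile (ts.take t.leaves) ≤ leafProfile [(t.graft ts).1] := by
  rw [leafProfile_singleton, t.leaves_graft_fst ts h, ← Multiset.sum_coe]
  refine Multiset.toColex_toFinsupp_le_single_sum fun x hx => ?_
  obtain ⟨u, -, rfl⟩ := List.mem_map.1 hx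
  exact u.one_le_leaves

lemma leafProfile_take_le_graft (E : CForest s) : ∀ ts : List (CTree s), E.leaves ≤ ts.length →
    leafProfile (ts.take E.leaves) ≤ leafProfile (graft E ts) := by
  induction E with
  | nil => intro ts _; simp [leaves, graft, leafProfile]
  | cons t E ih =>
    intro ts h
    have hcons : leaves (t :: E) = t.leaves + leaves E := by simp [leaves]
    rw [hcons] at h ⊢
    rw [List.take_add, graft_cons, ← List.singleton_append, leafProfile_append,
      leafProfile_append]
    exact add_le_add (leafProfile_take_le_graft_fst t ts (by omega))
      (ih _ (by rw [List.length_drop]; omega))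

end CForest

lemma List.map_lt_map_of_pairwise_gt {α β : Type*} [LT α] [LT β] {f g : α → β}
    {L : List α} (hL : L.Pairwise (· > ·)) {i : α} (hi : i ∈ L)
    (habove : ∀ j, i < j → f j = g j) (hlt : f i < g i) : L.map f < L.map g := by
  induction L with
  | nil => simp at hi
  | cons a L ih =>
    rcases List.mem_cons.1 hi with rfl | hi
    · exact List.Lex.rel hlt
    · rw [List.map_cons, List.map_cons, habove a ((List.pairwise_cons.1 hL).1 i hi)]
      exact List.Lex.cons (ih hL.of_cons hi)

lemma Finsupp.map_range'_reverse_le_of_toColex_le {f g : ℕ →₀ ℕ} {a m : ℕ}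
    (hfg : toColex f ≤ toColex g) (hg : ∀ k ∈ g.support, k < a + m) :
    (List.range' a m).reverse.map f ≤ (List.range' a m).reverse.map g := by
  rcases hfg.lt_or_eq with hlt | heq
  · obtain ⟨i, habove, hi⟩ := Colex.lt_iff.1 hlt
    have hig : i < a + m := hg i (Finsupp.mem_support_iff.2 (ne_bot_of_gt hi))
    by_cases hia : a ≤ i
    · refine (List.map_lt_map_of_pairwise_gt ?_ ?_ habove hi).le
      · exact List.pairwise_reverse.2 (List.pairwise_lt_range' (s := a))
      · rw [List.mem_reverse, List.mem_range'_1]; omega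
    · refine (List.map_congr_left fun j hj => habove j ?_).le
      rw [List.mem_reverse, List.mem_range'_1] at hj
      omega
  · rw [toColex_inj.1 heq]

lemma muVec_le_of_leafProfile_le {s : ℕ} {F F' : CForest s} (hF' : F'.IsElem)
    (h : F.leafProfile ≤ F'.leafProfile) : muVec s F ≤ muVec s F' := by
  have hfun (G : CForest s) : muCount G = ofColex G.leafProfile := funext fun k =>
    (G.leafProfile_apply k).symm
  rw [muVec, muVec, hfun, hfun]
  refine Finsupp.map_range'_reverse_le_of_toColex_le h fun k hk => ?_
  rw [Finsupp.mem_support_iff, F'.leafProfile_apply, muCount, Ne, List.count_eq_zero,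
    not_not] at hk
  obtain ⟨t, ht, rfl⟩ := List.mem_map.1 hk
  have := (hF' t ht).leaves_le
  omega

theorem mu_f_h_of_splitting_general (s : ℕ)
    (Fx Fy E : CForest s)
    (hFxElem : Fx.IsElem)
    (hfit : E.leaves = Fy.length)
    (hgraft : Fx = CForest.graft E Fy)
    (hnontrivial : ∃ t ∈ E, t ≠ CTree.leaf) :
    (muLt s Fy Fx ∨ muVec s Fy = muVec s Fx) ∧
    Fx.length < Fy.length ∧
    (hLt s Fx Fy ↔ muVec s Fx = muVec s Fy) ∧
    (hLt s Fy Fx ↔ muLt s Fy Fx) := by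
  have hprofile : Fy.leafProfile ≤ Fx.leafProfile := by
    have := E.leafProfile_take_le_graft Fy hfit.le
    rwa [hfit, List.take_length, ← hgraft] at this
  have hmu : muVec s Fy ≤ muVec s Fx := muVec_le_of_leafProfile_le hFxElem hprofile
  have hfeet : Fx.length < Fy.length := by
    rw [hgraft, CForest.length_graft, ← hfit]
    exact CForest.length_lt_leaves hnontrivial
  refine ⟨hmu.lt_or_eq, hfeet, ⟨?_, fun h => .inr ⟨h, hfeet⟩⟩, ⟨?_, .inl⟩⟩
  · rintro (hlt | ⟨heq, -⟩)
    · exact absurd hmu (not_le.2 hlt)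
    · exact heq
  · rintro (hlt | ⟨-, hlen⟩)
    · exact hlt
    · exact absurd hlen hfeet.asymm

/-- Let `x` and `y` be vertices of `sEB_n` with `x < y`, i.e.
`y` is obtained from `x` by a nontrivial splitting.  (Concretely: `x` and `y`
are dangling elementary braiges with merge forests `Fx` and `Fy` on `n` strands
and, for suitable representatives, `Fx` is obtained by grafting the trees of
`Fy` onto the leaves of a nontrivial forest `E`.)  Then `μ(x) ≥ μ(y)` and
`f(x) < f(y)`; moreover `h(x) < h(y)` iff `μ(x) = μ(y)`, and `h(x) > h(y)` iff
`μ(x) > μ(y)`. -/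
theorem mu_f_h_of_splitting (s n : ℕ) (hs : 1 ≤ s)
    (Fx Fy E : CForest s)
    (hFx : Fx.leaves = n) (hFy : Fy.leaves = n)
    (hFxElem : Fx.IsElem) (hFyElem : Fy.IsElem)
    (hfit : E.leaves = Fy.length)
    (hgraft : Fx = CForest.graft E Fy)
    (hnontrivial : ∃ t ∈ E, t ≠ CTree.leaf) :
    (muLt s Fy Fx ∨ muVec s Fy = muVec s Fx) ∧
    Fx.length < Fy.length ∧
    (hLt s Fx Fy ↔ muVec s Fx = muVec s Fy) ∧
    (hLt s Fy Fx ↔ muLt s Fy Fx) :=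
  mu_f_h_of_splitting_general s Fx Fy E hFxElem hfit hgraft hnontrivial
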